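/- Congruence under binders: if for every value v, the denotations of s and t agree in environments where x maps to v and y maps to v respectively, then λ x. s and λ y. t have the same denotation; similarly for ∀ x. s versus ∀ y. t and ∃ x. s versus ∃ y. t. -/

import Mathlib

/-- Congruence under binders (the Bind rule, with `B` ranging over λ, ∀, ∃):
if for every value `v` the denotations of `s` (with `x ↦ v`) and `t`
(with `y ↦ v`) agree, then `λ x. s` and `λ y. t` have the same denotation,
and similarly `∀ x. s` = `∀ y. t` and `∃ x. s` = `∃ y. t`.  The dependence of
a body on its bound variable and the ambient environment is modeled as a
function of both. -/
theorem cong_bind {Env : Type} {α : Type} {β : Type}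
    (s t : Env → α → β) (p q : Env → α → Prop)
    (h : ∀ (ρ : Env) (v : α), s ρ v = t ρ v)
    (hp : ∀ (ρ : Env) (v : α), p ρ v = q ρ v) :
    ∀ ρ : Env,
      ((fun x => s ρ x) = (fun y => t ρ y)) ∧
      ((∀ x, p ρ x) = (∀ y, q ρ y)) ∧
      ((∃ x, p ρ x) = (∃ y, q ρ y)) :=
  fun ρ => ⟨funext (h ρ), forall_congr (hp ρ), congrArg Exists (funext (hp ρ))⟩
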